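/- For every n ≥ 3, the cycle C_n on n vertices satisfies prf(C_n) = 2n−3. -/

import Mathlib

variable {V : Type*}

/-- The minimum position (in ordering `α`) over the closed neighborhood of `z`. -/
noncomputable def nbhdMin {n : ℕ} (G : SimpleGraph V) (α : V ≃ Fin n) (z : V) : ℕ :=
  sInf {m : ℕ | ∃ w, (w = z ∨ G.Adj w z) ∧ (α w : ℕ) = m}

/-- The profile of a vertex `z` in the ordering `α`. -/
noncomputable def vtxProfile {n : ℕ} (G : SimpleGraph V) (α : V ≃ Fin n) (z : V) : ℕ :=
  (α z : ℕ) - nbhdMin G α z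

/-- The profile of an ordering `α` of `G`. -/
noncomputable def ordProfile [Fintype V] {n : ℕ} (G : SimpleGraph V) (α : V ≃ Fin n) : ℕ :=
  ∑ z : V, vtxProfile G α z

/-- The profile of a graph `G`. -/
noncomputable def profile (G : SimpleGraph V) [Fintype V] : ℕ :=
  sInf {p : ℕ | ∃ α : V ≃ Fin (Fintype.card V), ordProfile G α = p}

open SimpleGraph Finset
open scoped Fin.CommRing

lemma nbhdMin_le {V : Type*} {n : ℕ} (G : SimpleGraph V) (α : V ≃ Fin n) {z w : V}
    (h : w = z ∨ G.Adj w z) : nbhdMin G α z ≤ (α w : ℕ) :=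
  Nat.sInf_le ⟨w, h, rfl⟩

lemma walk_boundary {m : ℕ} (S : Finset (Fin (m+3))) (u d : Fin (m+3))
    (hu : u ∉ S) (t : ℕ) (htS : u + (t : Fin (m+3)) * d ∈ S) :
    ∃ K, 1 ≤ K ∧ K ≤ t ∧ u + (K : Fin (m+3)) * d ∈ S ∧
      ∀ j, j < K → u + (j : Fin (m+3)) * d ∉ S := by
  classical
  have hex : ∃ k : ℕ, u + (k : Fin (m+3)) * d ∈ S := ⟨t, htS⟩
  refine ⟨Nat.find hex, ?_, Nat.find_min' hex htS, Nat.find_spec hex,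
    fun j hj => Nat.find_min hex hj⟩
  rcases Nat.eq_zero_or_pos (Nat.find hex) with h | h
  · exfalso
    have := Nat.find_spec hex
    rw [h] at this
    simpa using absurd this (by simpa using hu)
  · exact h

lemma boundary_mem {m : ℕ} (α : Fin (m+3) ≃ Fin (m+3)) (i : ℕ) (u d : Fin (m+3))
    (hd : ∀ x : Fin (m+3), (cycleGraph (m+3)).Adj x (x + d))
    (hu : i < (α u : ℕ)) (s₀ : Fin (m+3)) (hs₀ : (α s₀ : ℕ) ≤ i)
    (t : ℕ) (ht2 : t ≤ m+2) (hts : u + (t : Fin (m+3)) * d = s₀) :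
    ∃ K, 1 ≤ K ∧ K ≤ t ∧
      (nbhdMin (cycleGraph (m+3)) α (u + ((K-1 : ℕ) : Fin (m+3)) * d) ≤ i ∧
        i < (α (u + ((K-1 : ℕ) : Fin (m+3)) * d) : ℕ)) ∧
      ∀ j, j < K → i < (α (u + (j : Fin (m+3)) * d) : ℕ) := by
  classical
  set S : Finset (Fin (m+3)) := univ.filter (fun z => (α z : ℕ) ≤ i) with hS
  have hmemS : ∀ z, z ∈ S ↔ (α z : ℕ) ≤ i := by intro z; simp [hS]
  have huS : u ∉ S := by simp [hmemS]; omega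
  have htS : u + (t : Fin (m+3)) * d ∈ S := by rw [hts, hmemS]; exact hs₀
  obtain ⟨K, hK1, hKt, hKS, hKmin⟩ := walk_boundary S u d huS t htS
  set z := u + ((K-1 : ℕ) : Fin (m+3)) * d with hz
  set w := u + (K : Fin (m+3)) * d with hw
  have hwz : w = z + d := by
    rw [hz, hw]
    have : ((K : ℕ) : Fin (m+3)) = ((K-1 : ℕ) : Fin (m+3)) + 1 := by
      rw [← Nat.cast_add_one]
      congr 1
      omega
    rw [this]
    ring
  have hzS : z ∉ S := hKmin (K-1) (by omega)
  have hzT : i < (α z : ℕ) := by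
    have := (hmemS z).not.1 hzS
    omega
  have hadj : (cycleGraph (m+3)).Adj w z := by
    rw [hwz]; exact (hd z).symm
  have hnb : nbhdMin (cycleGraph (m+3)) α z ≤ i := by
    calc nbhdMin (cycleGraph (m+3)) α z ≤ (α w : ℕ) := nbhdMin_le _ _ (Or.inr hadj)
    _ ≤ i := (hmemS w).1 hKS
  refine ⟨K, hK1, hKt, ⟨hnb, hzT⟩, fun j hj => ?_⟩
  have := (hmemS _).not.1 (hKmin j hj)
  omega

lemma adj_add_one {m : ℕ} (x : Fin (m+3)) : (cycleGraph (m+3)).Adj x (x + 1) := by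
  rw [cycleGraph_adj (n := m+1)]; right; simp

lemma adj_add_neg_one {m : ℕ} (x : Fin (m+3)) : (cycleGraph (m+3)).Adj x (x + (-1)) := by
  rw [cycleGraph_adj (n := m+1)]; left; simp

lemma sub_val_ge_one {m : ℕ} {u v : Fin (m+3)} (h : u ≠ v) : 1 ≤ ((v - u) : Fin (m+3)).val := by
  have h2 : v - u ≠ 0 := by simpa [sub_eq_zero] using h.symm
  exact Fin.pos_of_ne_zero h2

lemma delta_ge_one {m : ℕ} (α : Fin (m+3) ≃ Fin (m+3)) (i : ℕ) (hi : i ≤ m+1) :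
    ∃ z : Fin (m+3), nbhdMin (cycleGraph (m+3)) α z ≤ i ∧ i < (α z : ℕ) := by
  classical
  set u : Fin (m+3) := α.symm ⟨m+2, by omega⟩ with hu_def
  have hu : i < (α u : ℕ) := by simp [hu_def]; omega
  set s₀ : Fin (m+3) := α.symm ⟨0, by omega⟩ with hs_def
  have hs₀ : (α s₀ : ℕ) ≤ i := by simp [hs_def]
  have hne : s₀ ≠ u := by
    intro h
    rw [h] at hs₀
    omega
  set t : ℕ := ((s₀ - u) : Fin (m+3)).val with ht_def
  have ht2 : t ≤ m+2 := by omega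
  have hts : u + (t : Fin (m+3)) * 1 = s₀ := by
    rw [ht_def, Fin.cast_val_eq_self]
    ring
  obtain ⟨K, hK1, hKt, ⟨hnb, hzT⟩, _⟩ :=
    boundary_mem α i u 1 adj_add_one hu s₀ hs₀ t ht2 hts
  exact ⟨_, hnb, hzT⟩

lemma delta_ge_two {m : ℕ} (α : Fin (m+3) ≃ Fin (m+3)) (i : ℕ) (hi : i ≤ m) :
    2 ≤ (univ.filter (fun z : Fin (m+3) =>
      nbhdMin (cycleGraph (m+3)) α z ≤ i ∧ i < (α z : ℕ))).card := by
  classical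
  by_contra hcon
  push_neg at hcon
  have hcard : (univ.filter (fun z : Fin (m+3) =>
      nbhdMin (cycleGraph (m+3)) α z ≤ i ∧ i < (α z : ℕ))).card ≤ 1 := by omega
  have huniq : ∀ x y : Fin (m+3),
      (nbhdMin (cycleGraph (m+3)) α x ≤ i ∧ i < (α x : ℕ)) →
      (nbhdMin (cycleGraph (m+3)) α y ≤ i ∧ i < (α y : ℕ)) → x = y := by
    intro x y hx hy
    exact Finset.card_le_one.1 hcard x (by simp [hx]) y (by simp [hy])
  set s₀ : Fin (m+3) := α.symm ⟨0, by omega⟩ with hs_def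
  have hs₀ : (α s₀ : ℕ) ≤ i := by simp [hs_def]
  -- get some boundary vertex v
  obtain ⟨v, hv⟩ := delta_ge_one α i (by omega)
  -- choose u not in S with u ≠ v
  have hu12 : ∀ j : ℕ, j = m+1 ∨ j = m+2 → ∀ h : j < m+3, i < (α (α.symm ⟨j, h⟩) : ℕ) := by
    intro j hj h; simp; omega
  obtain ⟨u, hu, huv⟩ : ∃ u : Fin (m+3), i < (α u : ℕ) ∧ u ≠ v := by
    by_cases h : α.symm ⟨m+2, by omega⟩ = v
    · refine ⟨α.symm ⟨m+1, by omega⟩, hu12 (m+1) (Or.inl rfl) _, ?_⟩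
      rw [← h]
      intro hc
      have := α.symm.injective hc
      simp at this
    · exact ⟨α.symm ⟨m+2, by omega⟩, hu12 (m+2) (Or.inr rfl) _, h⟩
  have hsu : s₀ ≠ u := by
    intro h; rw [h] at hs₀; omega
  -- forward walk
  have htsf : u + ((((s₀ - u) : Fin (m+3)).val : ℕ) : Fin (m+3)) * 1 = s₀ := by
    rw [Fin.cast_val_eq_self]; ring
  obtain ⟨Kf, hKf1, hKft, hzf, hPf⟩ :=
    boundary_mem α i u 1 adj_add_one hu s₀ hs₀ _ (by omega) htsf
  have hKfle : Kf ≤ m+2 := le_trans hKft (by omega)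
  have hzfv : u + ((Kf-1 : ℕ) : Fin (m+3)) * 1 = v := huniq _ _ hzf hv
  have hKf2 : 2 ≤ Kf := by
    rcases Nat.lt_or_ge Kf 2 with h | h
    · exfalso
      have hKf : Kf = 1 := by omega
      rw [hKf] at hzfv
      simp at hzfv
      exact huv hzfv
    · exact h
  -- backward walk
  have htsb : u + ((((u - s₀) : Fin (m+3)).val : ℕ) : Fin (m+3)) * (-1) = s₀ := by
    rw [Fin.cast_val_eq_self]; ring
  obtain ⟨Kb, hKb1, hKbt, hzb, hPb⟩ :=
    boundary_mem α i u (-1) adj_add_neg_one hu s₀ hs₀ _ (by omega) htsb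
  have hKble : Kb ≤ m+2 := le_trans hKbt (by omega)
  have hzbv : u + ((Kb-1 : ℕ) : Fin (m+3)) * (-1) = v := huniq _ _ hzb hv
  have hKb2 : 2 ≤ Kb := by
    rcases Nat.lt_or_ge Kb 2 with h | h
    · exfalso
      have hKb : Kb = 1 := by omega
      rw [hKb] at hzbv
      simp at hzbv
      exact huv hzbv
    · exact h
  -- the two arcs meet: (Kf-1) + (Kb-1) ≡ 0 [MOD m+3]
  have hdvd : (m+3) ∣ (Kf-1) + (Kb-1) := by
    rw [← Fin.natCast_eq_zero (n := m+3), Nat.cast_add]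
    have : ((Kf-1 : ℕ) : Fin (m+3)) * 1 = ((Kb-1 : ℕ) : Fin (m+3)) * (-1) := by
      have := hzfv.trans hzbv.symm
      exact add_left_cancel this
    rw [mul_one] at this
    rw [this]
    ring
  have hsum : (Kf-1) + (Kb-1) = m+3 := by
    obtain ⟨c, hc⟩ := hdvd
    have hc2 : c < 2 := by
      by_contra hcc
      push_neg at hcc
      have : (m+3) * 2 ≤ (m+3) * c := Nat.mul_le_mul_left _ hcc
      omega
    interval_cases c <;> omega
  -- coverage: s₀ is not covered, contradiction
  set t₀ : ℕ := ((s₀ - u) : Fin (m+3)).val with ht₀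
  have ht₀3 : t₀ < m+3 := by omega
  rcases Nat.lt_or_ge t₀ Kf with h | h
  · have := hPf t₀ h
    rw [ht₀] at this
    rw [htsf] at this
    omega
  · have hlt : m+3-t₀ < Kb := by omega
    have := hPb (m+3-t₀) hlt
    have heq : u + (((m+3-t₀ : ℕ)) : Fin (m+3)) * (-1) = s₀ := by
      rw [Nat.cast_sub (by omega)]
      have h3 : ((m+3 : ℕ) : Fin (m+3)) = 0 := by
        simp [Fin.natCast_eq_zero]
      rw [h3]
      have h4 : ((t₀ : ℕ) : Fin (m+3)) = s₀ - u := by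
        rw [ht₀, Fin.cast_val_eq_self]
      rw [h4]
      ring
    rw [heq] at this
    omega

lemma nbhdMin_le_self {V : Type*} {n : ℕ} (G : SimpleGraph V) (α : V ≃ Fin n) (z : V) :
    nbhdMin G α z ≤ (α z : ℕ) := nbhdMin_le G α (Or.inl rfl)

lemma lower_bound {m : ℕ} (α : Fin (m+3) ≃ Fin (m+3)) :
    2*m+3 ≤ ordProfile (cycleGraph (m+3)) α := by
  classical
  set G := cycleGraph (m+3) with hG
  have hprof : ∀ z : Fin (m+3), vtxProfile G α z =
      ∑ i ∈ Finset.range (m+2), if nbhdMin G α z ≤ i ∧ i < (α z : ℕ) then 1 else 0 := by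
    intro z
    have hb := nbhdMin_le_self G α z
    have ha : (α z : ℕ) < m+3 := (α z).isLt
    rw [← Finset.card_filter]
    have : (Finset.range (m+2)).filter (fun i => nbhdMin G α z ≤ i ∧ i < (α z : ℕ))
        = Finset.Ico (nbhdMin G α z) ((α z : ℕ)) := by
      ext j
      simp only [Finset.mem_filter, Finset.mem_range, Finset.mem_Ico]
      omega
    rw [this, Nat.card_Ico]
    rfl
  have h1 : ordProfile G α = ∑ i ∈ Finset.range (m+2),
      (univ.filter (fun z : Fin (m+3) => nbhdMin G α z ≤ i ∧ i < (α z : ℕ))).card := by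
    unfold ordProfile
    simp_rw [hprof, Finset.card_filter]
    rw [Finset.sum_comm]
  rw [h1, Finset.sum_range_succ]
  have h2 : 2*(m+1) ≤ ∑ i ∈ Finset.range (m+1),
      (univ.filter (fun z : Fin (m+3) => nbhdMin G α z ≤ i ∧ i < (α z : ℕ))).card := by
    calc 2*(m+1) = ∑ _i ∈ Finset.range (m+1), 2 := by simp [mul_comm]
    _ ≤ _ := Finset.sum_le_sum (fun i hi => delta_ge_two α i (by
        simp only [Finset.mem_range] at hi; omega))
  have h3 : 1 ≤ (univ.filter (fun z : Fin (m+3) =>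
      nbhdMin G α z ≤ m+1 ∧ m+1 < (α z : ℕ))).card := by
    obtain ⟨z, hz⟩ := delta_ge_one α (m+1) (le_refl _)
    exact Finset.card_pos.2 ⟨z, by simp [hG, hz]⟩
  omega

lemma nbhdMin_mem {V : Type*} {n : ℕ} (G : SimpleGraph V) (α : V ≃ Fin n) (z : V) :
    ∃ w, (w = z ∨ G.Adj w z) ∧ (α w : ℕ) = nbhdMin G α z :=
  Nat.sInf_mem (⟨(α z : ℕ), z, Or.inl rfl, rfl⟩ :
    {m : ℕ | ∃ w, (w = z ∨ G.Adj w z) ∧ (α w : ℕ) = m}.Nonempty)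

lemma nbhdMin_refl {m : ℕ} (z : Fin (m+3)) :
    nbhdMin (cycleGraph (m+3)) (Equiv.refl (Fin (m+3))) z =
      if z.val = 0 ∨ z.val = m+2 then 0 else z.val - 1 := by
  have hsub : 1 ≤ z.val → (z - 1).val = z.val - 1 := by
    intro h; rw [Fin.coe_sub_one, if_neg (by intro hz; rw [hz] at h; simp at h)]
  have hadd : z.val < m+2 → (z + 1).val = z.val + 1 := by
    intro h; rw [Fin.val_add_one, if_neg (by intro hz; rw [hz] at h; simp at h)]
  have hadd2 : z.val = m+2 → (z + 1).val = 0 := by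
    intro h; rw [Fin.val_add_one]; simp [Fin.ext_iff, Fin.last, h]
  apply le_antisymm
  · by_cases h0 : z.val = 0
    · rw [if_pos (Or.inl h0)]
      have h := nbhdMin_le (cycleGraph (m+3)) (Equiv.refl (Fin (m+3)))
        (Or.inl (rfl : z = z))
      simp only [Equiv.refl_apply] at h
      omega
    by_cases h2 : z.val = m+2
    · rw [if_pos (Or.inr h2)]
      have hAdj : (cycleGraph (m+3)).Adj (z+1) z := by
        rw [cycleGraph_adj (n := m+1)]; left; ring
      have h := nbhdMin_le (cycleGraph (m+3)) (Equiv.refl (Fin (m+3))) (Or.inr hAdj)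
      simp only [Equiv.refl_apply] at h
      rw [hadd2 h2] at h
      omega
    · rw [if_neg (by omega)]
      have hAdj : (cycleGraph (m+3)).Adj (z-1) z := by
        rw [cycleGraph_adj (n := m+1)]; right; ring
      have h := nbhdMin_le (cycleGraph (m+3)) (Equiv.refl (Fin (m+3))) (Or.inr hAdj)
      simp only [Equiv.refl_apply] at h
      rw [hsub (by omega)] at h
      omega
  · obtain ⟨w, hw, heq⟩ := nbhdMin_mem (cycleGraph (m+3)) (Equiv.refl (Fin (m+3))) z
    rw [← heq]
    simp only [Equiv.refl_apply]
    by_cases h0 : z.val = 0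
    · simp [h0]
    by_cases h2 : z.val = m+2
    · simp [h2]
    rw [if_neg (by omega)]
    rcases hw with rfl | hadj
    · omega
    · rw [cycleGraph_adj (n := m+1)] at hadj
      rcases hadj with h | h
      · have hwz : w = z + 1 := by linear_combination h
        rw [hwz, hadd (by omega)]
        omega
      · have hwz : w = z - 1 := by linear_combination -h
        rw [hwz, hsub (by omega)]

lemma aux_sum (r : ℕ) : ∑ k ∈ Finset.range r, (if k = 0 then 0 else 1) = r - 1 := by
  induction r with
  | zero => simp
  | succ r ih =>
    rw [Finset.sum_range_succ, ih]
    rcases Nat.eq_zero_or_pos r with h | h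
    · simp [h]
    · rw [if_neg (by omega)]; omega

lemma upper_bound {m : ℕ} :
    ordProfile (cycleGraph (m+3)) (Equiv.refl (Fin (m+3))) = 2*m+3 := by
  have h : ∀ z : Fin (m+3), vtxProfile (cycleGraph (m+3)) (Equiv.refl (Fin (m+3))) z
      = (fun k => if k = 0 ∨ k = m+2 then k else 1) (z.val) := by
    intro z
    unfold vtxProfile
    simp only [Equiv.refl_apply, nbhdMin_refl]
    by_cases h0 : z.val = 0
    · simp [h0]
    by_cases h2 : z.val = m+2
    · simp [h2]
    · rw [if_neg (by omega), if_neg (by omega)]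
      omega
  unfold ordProfile
  rw [Finset.sum_congr rfl (fun z _ => h z),
    Fin.sum_univ_eq_sum_range (fun k => if k = 0 ∨ k = m+2 then k else 1) (m+3)]
  rw [Finset.sum_range_succ]
  have h2 : ∑ k ∈ Finset.range (m+2), (fun k => if k = 0 ∨ k = m+2 then k else 1) k
      = ∑ k ∈ Finset.range (m+2), (if k = 0 then 0 else 1) := by
    apply Finset.sum_congr rfl
    intro k hk
    simp only [Finset.mem_range] at hk
    simp only []
    by_cases h0 : k = 0
    · simp [h0]
    · rw [if_neg (by omega), if_neg (by omega)]
  rw [h2, aux_sum]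
  simp
  omega

lemma nbhdMin_congr {V : Type*} {n n' : ℕ} (G : SimpleGraph V) (α : V ≃ Fin n)
    (β : V ≃ Fin n') (h : ∀ w, (α w : ℕ) = (β w : ℕ)) (z : V) :
    nbhdMin G α z = nbhdMin G β z := by
  unfold nbhdMin
  congr 1
  ext k
  constructor
  · rintro ⟨w, hw, rfl⟩; exact ⟨w, hw, (h w).symm⟩
  · rintro ⟨w, hw, rfl⟩; exact ⟨w, hw, h w⟩

lemma ordProfile_congr {V : Type*} [Fintype V] {n n' : ℕ} (G : SimpleGraph V)
    (α : V ≃ Fin n) (β : V ≃ Fin n') (h : ∀ w, (α w : ℕ) = (β w : ℕ)) :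
    ordProfile G α = ordProfile G β := by
  unfold ordProfile vtxProfile
  apply Finset.sum_congr rfl
  intro z _
  rw [h z, nbhdMin_congr G α β h]

/-- The profile of the cycle `C_n` (`n ≥ 3`) equals `2n - 3`. -/
theorem profile_cycleGraph (n : ℕ) (hn : 3 ≤ n) :
    profile (SimpleGraph.cycleGraph n) = 2 * n - 3 := by
  obtain ⟨m, rfl⟩ : ∃ m, n = m + 3 := ⟨n - 3, by omega⟩
  have hc : Fintype.card (Fin (m+3)) = m+3 := Fintype.card_fin _
  have hval : 2 * (m+3) - 3 = 2*m+3 := by omega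
  rw [hval]
  -- the canonical equiv Fin (m+3) ≃ Fin (card (Fin (m+3)))
  set α₀ : Fin (m+3) ≃ Fin (Fintype.card (Fin (m+3))) := finCongr hc.symm with hα₀
  have hα₀v : ∀ w : Fin (m+3), (α₀ w : ℕ) = ((Equiv.refl (Fin (m+3))) w : ℕ) := by
    intro w; simp [hα₀]
  apply le_antisymm
  · apply Nat.sInf_le
    exact ⟨α₀, by rw [ordProfile_congr _ α₀ (Equiv.refl (Fin (m+3))) hα₀v, upper_bound]⟩
  · have hne : {p : ℕ | ∃ α : Fin (m+3) ≃ Fin (Fintype.card (Fin (m+3))),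
        ordProfile (cycleGraph (m+3)) α = p}.Nonempty := ⟨_, α₀, rfl⟩
    obtain ⟨α, hα⟩ := Nat.sInf_mem hne
    rw [profile, ← hα]
    set β : Fin (m+3) ≃ Fin (m+3) := α.trans (finCongr hc) with hβ
    have hv : ∀ w : Fin (m+3), (α w : ℕ) = (β w : ℕ) := by intro w; simp [hβ]
    rw [ordProfile_congr _ α β hv]
    exact lower_bound β
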